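/- arXiv:1905.09981 — 7 statements merged into one kernel-verified Lean document; each statement's English description precedes it below -/
import Mathlib

section
/- Let ν be a probability measure on E × M with first marginal m, with disintegration {ν_α : α ∈ E} with respect to m. Let 𝒫 be the Markov operator of the transition probability p̂((α,x),B) = ∫ 1_B(β, f_β(x)) p(α,dβ), and let q be the transition probability in duality with p relative to m. Then 𝒫ν has first marginal m and its disintegration with respect to m satisfies (𝒫ν)_α = ∫ (f_α)_*ν_β q(α,dβ) for m-almost every α. -/
/-! Write `ν = m ⊗ κ` with `κ` the disintegration kernel. Then
`𝒫ν(A × B) = ∫ m(dα) ∫ κ_α(dx) ∫_A p(α,dβ) 1_B(f_β x)`, and exchanging the two inner integrals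
turns this into the integral of `1_A(β) κ_α(f_β⁻¹ B)` against `m ⊗ p`. Duality says exactly that
`m ⊗ p` is the image of `m ⊗ q` under the swap of coordinates, so the same number is
`∫_A m(dα) ∫ q(α,dβ) κ_β(f_α⁻¹ B)`: that is, `𝒫ν = m ⊗ η` with `η_α = ∫ (f_α)_* κ_β q(α,dβ)`
(`Kernel.bindMap`). -/

open MeasureTheory ProbabilityTheory ENNReal

/-- A family `να` is a disintegration of `ν` with respect to `m` (first marginal on `E`). -/
def IsDisint {E M : Type*} [MeasurableSpace E] [MeasurableSpace M]
    (m : Measure E) (ν : Measure (E × M)) (να : E → Measure M) : Prop :=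
  (∀ α, IsProbabilityMeasure (να α)) ∧
  (∀ B : Set M, MeasurableSet B → Measurable fun α => να α B) ∧
  (∀ (A : Set E) (B : Set M), MeasurableSet A → MeasurableSet B →
    ν (A ×ˢ B) = ∫⁻ α in A, να α B ∂m)

section

variable {E M : Type*} [MeasurableSpace E] [MeasurableSpace M]

namespace IsDisint

variable {m : Measure E} {ν : Measure (E × M)} {να : E → Measure M}

noncomputable def kernel (h : IsDisint m ν να) : Kernel E M :=
  ⟨να, Measure.measurable_of_measurable_coe _ h.2.1⟩

instance isMarkovKernel_kernel (h : IsDisint m ν να) : IsMarkovKernel h.kernel := ⟨h.1⟩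

lemma eq_compProd [IsFiniteMeasure m] (h : IsDisint m ν να) : ν = m ⊗ₘ h.kernel :=
  (Measure.ext_prod fun hA hB => by
    rw [Measure.compProd_apply_prod hA hB, h.2.2 _ _ hA hB]; rfl).symm

end IsDisint

lemma isDisint_compProd (m : Measure E) [SFinite m] (κ : Kernel E M) [IsMarkovKernel κ] :
    IsDisint m (m ⊗ₘ κ) κ :=
  ⟨inferInstance, fun _ hB => κ.measurable_coe hB,
    fun _ _ hA hB => Measure.compProd_apply_prod hA hB⟩

lemma compProd_eq_map_swap_of_dual {m : Measure E} [IsFiniteMeasure m] {p q : Kernel E E}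
    [IsSFiniteKernel p] [IsFiniteKernel q]
    (hdual : ∀ A B : Set E, MeasurableSet A → MeasurableSet B →
      ∫⁻ α in B, p α A ∂m = ∫⁻ β in A, q β B ∂m) :
    m ⊗ₘ q = (m ⊗ₘ p).map Prod.swap :=
  Measure.ext_prod fun {A B} hA hB => by
    rw [Measure.compProd_apply_prod hA hB, Measure.map_apply measurable_swap (hA.prod hB),
      Set.preimage_swap_prod, Measure.compProd_apply_prod hB hA]
    exact (hdual A B hA hB).symm

variable {f : E → M → M}

lemma measurable_prodMk_apply (hf : Measurable fun z : E × M => f z.1 z.2) (x : M) :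
    Measurable fun β => (β, f β x) :=
  measurable_id.prodMk (hf.comp measurable_prodMk_right)

lemma lintegral_apply_inter_preimage_comm (hf : Measurable fun z : E × M => f z.1 z.2)
    (μ : Measure M) (ρ : Measure E) [SFinite μ] [SFinite ρ] {A : Set E} {B : Set M}
    (hA : MeasurableSet A) (hB : MeasurableSet B) :
    ∫⁻ x, ρ (A ∩ {β | f β x ∈ B}) ∂μ = ∫⁻ β in A, μ (f β ⁻¹' B) ∂ρ := by
  set t : Set (M × E) := {z | z.2 ∈ A ∧ f z.2 z.1 ∈ B}
  have ht : MeasurableSet t :=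
    (measurable_snd hA).inter (hB.preimage (hf.comp measurable_swap))
  calc ∫⁻ x, ρ (A ∩ {β | f β x ∈ B}) ∂μ = μ.prod ρ t := (Measure.prod_apply ht).symm
    _ = ∫⁻ β, μ ((·, β) ⁻¹' t) ∂ρ := Measure.prod_apply_symm ht
    _ = ∫⁻ β, A.indicator (fun β => μ (f β ⁻¹' B)) β ∂ρ := by
      refine lintegral_congr fun β => ?_
      by_cases hβ : β ∈ A <;> simp [t, hβ, Set.preimage]
    _ = ∫⁻ β in A, μ (f β ⁻¹' B) ∂ρ := lintegral_indicator hA _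

lemma bind_map_apply (hf : Measurable fun z : E × M => f z.1 z.2) (ρ : Measure E)
    (κ : Kernel E M) (α : E) {B : Set M} (hB : MeasurableSet B) :
    (ρ.bind fun β => (κ β).map (f α)) B = ∫⁻ β, κ β (f α ⁻¹' B) ∂ρ := by
  have hfα : Measurable (f α) := hf.comp measurable_prodMk_left
  rw [Measure.bind_apply (f := fun β => (κ β).map (f α)) hB
    ((Measure.measurable_map _ hfα).comp κ.measurable).aemeasurable]
  exact lintegral_congr fun β => Measure.map_apply hfα hB

namespace ProbabilityTheory.Kernel

lemma measurable_apply_preimage (hf : Measurable fun z : E × M => f z.1 z.2) (κ : Kernel E M)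
    [IsSFiniteKernel κ] {B : Set M} (hB : MeasurableSet B) :
    Measurable fun w : E × E => κ w.1 (f w.2 ⁻¹' B) :=
  measurable_kernel_prodMk_left (κ := κ.comap Prod.fst measurable_fst)
    (t := {z : (E × E) × M | f z.1.2 z.2 ∈ B})
    (hB.preimage (hf.comp (measurable_snd.comp measurable_fst |>.prodMk measurable_snd)))

noncomputable def bindMap (hf : Measurable fun z : E × M => f z.1 z.2) (q : Kernel E E)
    (κ : Kernel E M) [IsSFiniteKernel q] [IsSFiniteKernel κ] : Kernel E M where
  toFun α := (q α).bind fun β => (κ β).map (f α)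
  measurable' := Measure.measurable_of_measurable_coe _ fun B hB => by
    simp_rw [bind_map_apply hf _ κ _ hB]
    exact Measurable.lintegral_kernel_prod_right (f := fun α β => κ β (f α ⁻¹' B))
      ((measurable_apply_preimage hf κ hB).comp measurable_swap)

lemma bindMap_apply (hf : Measurable fun z : E × M => f z.1 z.2) (q : Kernel E E)
    (κ : Kernel E M) [IsSFiniteKernel q] [IsSFiniteKernel κ] (α : E) {B : Set M}
    (hB : MeasurableSet B) : bindMap hf q κ α B = ∫⁻ β, κ β (f α ⁻¹' B) ∂(q α) :=
  bind_map_apply hf _ κ α hB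

instance isMarkovKernel_bindMap (hf : Measurable fun z : E × M => f z.1 z.2)
    (q : Kernel E E) (κ : Kernel E M) [IsMarkovKernel q] [IsMarkovKernel κ] :
    IsMarkovKernel (bindMap hf q κ) :=
  ⟨fun α => ⟨by simp [bindMap_apply hf q κ α MeasurableSet.univ]⟩⟩

lemma apply_eq_map_of_lintegral_indicator (hf : Measurable fun z : E × M => f z.1 z.2)
    {p : Kernel E E} {phat : Kernel (E × M) (E × M)}
    (hphat : ∀ (z : E × M) (B : Set (E × M)), MeasurableSet B →
      phat z B = ∫⁻ β, B.indicator (fun _ => (1 : ℝ≥0∞)) (β, f β z.2) ∂(p z.1))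
    (z : E × M) : phat z = (p z.1).map fun β => (β, f β z.2) := by
  ext B hB
  rw [hphat z B hB, Measure.map_apply (measurable_prodMk_apply hf z.2) hB,
    ← lintegral_indicator_one (measurable_prodMk_apply hf z.2 hB)]
  rfl

end ProbabilityTheory.Kernel

theorem compProd_bind_eq_compProd_bindMap (hf : Measurable fun z : E × M => f z.1 z.2)
    {m : Measure E} [IsFiniteMeasure m] {p q : Kernel E E} [IsSFiniteKernel p] [IsMarkovKernel q]
    (hdual : ∀ A B : Set E, MeasurableSet A → MeasurableSet B →
      ∫⁻ α in B, p α A ∂m = ∫⁻ β in A, q β B ∂m)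
    (κ : Kernel E M) [IsMarkovKernel κ] {phat : Kernel (E × M) (E × M)}
    (hphat : ∀ z, phat z = (p z.1).map fun β => (β, f β z.2)) :
    (m ⊗ₘ κ).bind phat = m ⊗ₘ Kernel.bindMap hf q κ := by
  refine (Measure.ext_prod fun {A B} hA hB => ?_).symm
  have hF := Kernel.measurable_apply_preimage hf κ hB
  have hF' : Measurable fun w : E × E => κ w.2 (f w.1 ⁻¹' B) := hF.comp measurable_swap
  have hAB := hA.prod hB
  calc (m ⊗ₘ Kernel.bindMap hf q κ) (A ×ˢ B)
      = ∫⁻ α in A, ∫⁻ β, κ β (f α ⁻¹' B) ∂q α ∂m := by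
        rw [Measure.compProd_apply_prod hA hB]
        simp_rw [Kernel.bindMap_apply hf q κ _ hB]
    _ = ∫⁻ w in A ×ˢ Set.univ, κ w.2 (f w.1 ⁻¹' B) ∂(m ⊗ₘ q) := by
        rw [Measure.setLIntegral_compProd hF' hA .univ]
        simp only [Measure.restrict_univ]
    _ = ∫⁻ w in Set.univ ×ˢ A, κ w.1 (f w.2 ⁻¹' B) ∂(m ⊗ₘ p) := by
        rw [compProd_eq_map_swap_of_dual hdual,
          setLIntegral_map (hA.prod .univ) hF' measurable_swap, Set.preimage_swap_prod]
        rfl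
    _ = ∫⁻ α, ∫⁻ β in A, κ α (f β ⁻¹' B) ∂p α ∂m := by
        rw [Measure.setLIntegral_compProd hF .univ hA, Measure.restrict_univ]
    _ = ∫⁻ α, ∫⁻ x, p α (A ∩ {β | f β x ∈ B}) ∂κ α ∂m := by
        simp_rw [lintegral_apply_inter_preimage_comm hf _ _ hA hB]
    _ = ∫⁻ z, phat z (A ×ˢ B) ∂(m ⊗ₘ κ) := by
        rw [Measure.lintegral_compProd (phat.measurable_coe hAB)]
        refine lintegral_congr fun α => lintegral_congr fun x => ?_
        rw [hphat, Measure.map_apply (measurable_prodMk_apply hf x) hAB, Set.mk_preimage_prod]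
        rfl
    _ = _ := (Measure.bind_apply hAB phat.measurable.aemeasurable).symm

end

theorem markov_operator_disintegration_general {E M : Type*}
    [MeasurableSpace E] [MeasurableSpace M]
    (p q : ProbabilityTheory.Kernel E E) [IsMarkovKernel p] [IsMarkovKernel q]
    (m : Measure E) [IsProbabilityMeasure m]
    (hdual : ∀ A B : Set E, MeasurableSet A → MeasurableSet B →
      ∫⁻ α in B, p α A ∂m = ∫⁻ β in A, q β B ∂m)
    (f : E → M → M) (hf : Measurable fun z : E × M => f z.1 z.2)
    (phat : ProbabilityTheory.Kernel (E × M) (E × M))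
    (hphat : ∀ (z : E × M) (B : Set (E × M)), MeasurableSet B →
      phat z B = ∫⁻ β, B.indicator (fun _ => (1 : ℝ≥0∞)) (β, f β z.2) ∂(p z.1))
    (ν : Measure (E × M))
    (να : E → Measure M) (hdis : IsDisint m ν να) :
    (ν.bind (fun z => phat z)).map Prod.fst = m ∧
    IsDisint m (ν.bind (fun z => phat z))
      (fun α => (q α : Measure E).bind (fun β => (να β).map (f α))) := by
  have hbind : ν.bind phat = m ⊗ₘ Kernel.bindMap hf q hdis.kernel := by
    -- `conv`, because `hdis.kernel` itself depends on `ν`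
    conv_lhs => rw [hdis.eq_compProd]
    exact compProd_bind_eq_compProd_bindMap hf hdual _
      (Kernel.apply_eq_map_of_lintegral_indicator hf hphat)
  rw [hbind]
  exact ⟨Measure.fst_compProd m _, isDisint_compProd m _⟩

/-- If `ν` has first marginal `m`, then `𝒫ν` has first marginal `m` and
its disintegration with respect to `m` is `(𝒫ν)_α = ∫ (f_α)_* ν_β q(α,dβ)`. -/
theorem markov_operator_disintegration {E M : Type*}
    [MeasurableSpace E] [StandardBorelSpace E] [MeasurableSpace M] [StandardBorelSpace M]
    (p q : ProbabilityTheory.Kernel E E) [IsMarkovKernel p] [IsMarkovKernel q]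
    (m : Measure E) [IsProbabilityMeasure m]
    (hstat : ∀ A : Set E, MeasurableSet A → m A = ∫⁻ α, p α A ∂m)
    (huniq : ∀ m' : Measure E, IsProbabilityMeasure m' →
      (∀ A : Set E, MeasurableSet A → m' A = ∫⁻ α, p α A ∂m') → m' = m)
    (hdual : ∀ A B : Set E, MeasurableSet A → MeasurableSet B →
      ∫⁻ α in B, p α A ∂m = ∫⁻ β in A, q β B ∂m)
    (f : E → M → M) (hf : Measurable fun z : E × M => f z.1 z.2)
    (phat : ProbabilityTheory.Kernel (E × M) (E × M)) [IsMarkovKernel phat]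
    (hphat : ∀ (z : E × M) (B : Set (E × M)), MeasurableSet B →
      phat z B = ∫⁻ β, B.indicator (fun _ => (1 : ℝ≥0∞)) (β, f β z.2) ∂(p z.1))
    (ν : Measure (E × M)) [IsProbabilityMeasure ν]
    (hmarg : ν.map Prod.fst = m)
    (να : E → Measure M) (hdis : IsDisint m ν να) :
    (ν.bind (fun z => phat z)).map Prod.fst = m ∧
    IsDisint m (ν.bind (fun z => phat z))
      (fun α => (q α : Measure E).bind (fun β => (να β).map (f α))) :=
  markov_operator_disintegration_general p q m hdual f hf phat hphat ν να hdis
end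

section
/- Let ν be a probability measure on E × M with first marginal m and disintegration {ν_α} with respect to m. Then ν is a stationary measure of the transition probability p̂ (i.e. 𝒫ν = ν) if and only if ν_α = ∫ (f_α)_*ν_β q(α,dβ) for m-almost every α. -/
open MeasureTheory ProbabilityTheory ENNReal

/-!
Writing `κ` for the disintegration kernel, `ν = m ⊗ κ`. For a measurable `B ⊆ E × M`,
`𝒫ν(B) = ∫ m(dα) ∫ p(α,dβ) ∫ κ(α,dx) 1_B(β, f_β x)`. The duality of `p` and `q` says that
`m ⊗ p` is the image of `m ⊗ q` under the swap `(α, β) ↦ (β, α)`, so the right-hand side equals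
`∫ m(dα) ∫ q(α,dβ) ∫ κ(β,dx) 1_B(α, f_α x) = (m ⊗ κ')(B)` with `κ'(α) = ∫ (f_α)_* κ(β) q(α,dβ)`.
Hence `𝒫ν = ν` iff `m ⊗ κ' = m ⊗ κ`, iff `κ' = κ` `m`-almost everywhere.
-/

section

variable {E M : Type*} [MeasurableSpace E] [MeasurableSpace M]

lemma measurable_graph_section {N : Type*} [MeasurableSpace N] {f : E → M → N}
    (hf : Measurable fun z : E × M => f z.1 z.2) (x : M) : Measurable fun β => (β, f β x) :=
  measurable_id.prodMk (hf.comp (measurable_id.prodMk measurable_const))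

lemma MeasureTheory.Measure.eq_map_of_apply_eq_lintegral_indicator {μ : Measure M} {ρ : Measure E}
    {g : E → M} (hg : Measurable g)
    (h : ∀ B : Set M, MeasurableSet B → μ B = ∫⁻ β, B.indicator (fun _ => (1 : ℝ≥0∞)) (g β) ∂ρ) :
    μ = ρ.map g := by
  ext B hB
  rw [h B hB, ← lintegral_map (measurable_const.indicator hB) hg, lintegral_indicator_const hB,
    one_mul]

lemma MeasureTheory.Measure.bind_eq_self_iff {ν : Measure E} (κ : Kernel E E) :
    ν.bind κ = ν ↔ ∀ B : Set E, MeasurableSet B → ν B = ∫⁻ z, κ z B ∂ν := by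
  rw [Measure.ext_iff]
  exact forall₂_congr fun B hB => by rw [Measure.bind_apply hB κ.aemeasurable, eq_comm]

lemma MeasureTheory.Measure.compProd_eq_map_swap_of_setLIntegral_eq {m : Measure E}
    [IsFiniteMeasure m] {p q : Kernel E E} [IsFiniteKernel p] [IsSFiniteKernel q]
    (hdual : ∀ A B : Set E, MeasurableSet A → MeasurableSet B →
      ∫⁻ α in B, p α A ∂m = ∫⁻ β in A, q β B ∂m) :
    m ⊗ₘ p = (m ⊗ₘ q).map Prod.swap :=
  Measure.ext_prod fun hS hT => by
    rw [Measure.compProd_apply_prod hS hT, Measure.map_apply measurable_swap (hS.prod hT),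
      Set.preimage_swap_prod, Measure.compProd_apply_prod hT hS, hdual _ _ hT hS]

namespace IsDisint

variable {m : Measure E} {ν : Measure (E × M)} {να : E → Measure M}

lemma kernel_apply (h : IsDisint m ν να) (α : E) : h.kernel α = να α := rfl

instance (h : IsDisint m ν να) : IsMarkovKernel h.kernel := ⟨h.1⟩

end IsDisint

/-- The kernel `α ↦ ∫ (f α)_* κ(β) q(α, dβ)`, built as the image of `δ_α ⊗ (κ ∘ q)(α)` under
`(α, x) ↦ f α x`. -/
noncomputable def averagedPushforward {F N : Type*} [MeasurableSpace F] [MeasurableSpace N]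
    (q : Kernel E F) (κ : Kernel F M) (f : E → M → N) : Kernel E N :=
  (Kernel.id ×ₖ (κ ∘ₖ q)).map fun z => f z.1 z.2

section averagedPushforward

variable {F N : Type*} [MeasurableSpace F] [MeasurableSpace N]
  {q : Kernel E F} {κ : Kernel F M} {f : E → M → N}

instance [IsFiniteKernel q] [IsFiniteKernel κ] : IsFiniteKernel (averagedPushforward q κ f) := by
  unfold averagedPushforward; infer_instance

instance [IsSFiniteKernel q] [IsSFiniteKernel κ] :
    IsSFiniteKernel (averagedPushforward q κ f) := by
  unfold averagedPushforward; infer_instance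

lemma averagedPushforward_apply' [IsSFiniteKernel q] [IsSFiniteKernel κ]
    (hf : Measurable fun z : E × M => f z.1 z.2) (α : E) {C : Set N} (hC : MeasurableSet C) :
    averagedPushforward q κ f α C = ∫⁻ β, κ β (f α ⁻¹' C) ∂q α := by
  rw [averagedPushforward, Kernel.map_apply' _ hf _ hC, Kernel.id_prod_apply' _ _ (hf hC),
    Kernel.comp_apply' _ _ _ (measurable_prodMk_left (hf hC))]
  rfl

lemma averagedPushforward_apply [IsSFiniteKernel q] [IsSFiniteKernel κ]
    (hf : Measurable fun z : E × M => f z.1 z.2) (α : E) :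
    averagedPushforward q κ f α = (q α).bind fun β => (κ β).map (f α) := by
  have hfα : Measurable (f α) := hf.comp measurable_prodMk_left
  have hmap : Measurable fun β => (κ β).map (f α) :=
    (Measure.measurable_map _ hfα).comp κ.measurable
  ext C hC
  rw [averagedPushforward_apply' hf α hC, Measure.bind_apply hC hmap.aemeasurable]
  simp only [Measure.map_apply hfα hC]

end averagedPushforward

theorem bind_compProd_eq_compProd_averagedPushforward {m : Measure E} [SFinite m]
    {p q : Kernel E E} [IsSFiniteKernel p] [IsSFiniteKernel q] {κ : Kernel E M}
    [IsSFiniteKernel κ] {f : E → M → M} (hf : Measurable fun z : E × M => f z.1 z.2)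
    (hdual : m ⊗ₘ p = (m ⊗ₘ q).map Prod.swap) {phat : Kernel (E × M) (E × M)}
    (hphat : ∀ z, phat z = (p z.1).map fun β => (β, f β z.2)) :
    (m ⊗ₘ κ).bind phat = m ⊗ₘ averagedPushforward q κ f := by
  ext B hB
  let G : E × E → ℝ≥0∞ := fun c => κ c.1 {x | (c.2, f c.2 x) ∈ B}
  have hG : Measurable G :=
    Kernel.measurable_kernel_prodMk_left (κ := κ.comap Prod.fst measurable_fst) <|
      hB.preimage (measurable_fst.snd.prodMk (hf.comp (measurable_fst.snd.prodMk measurable_snd)))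
  have fubini : ∀ α, ∫⁻ x, phat (α, x) B ∂κ α = ∫⁻ β, G (α, β) ∂p α := by
    intro α
    have hS : MeasurableSet {y : M × E | (y.2, f y.2 y.1) ∈ B} :=
      hB.preimage (measurable_snd.prodMk (hf.comp (measurable_snd.prodMk measurable_fst)))
    calc ∫⁻ x, phat (α, x) B ∂κ α = (κ α).prod (p α) {y | (y.2, f y.2 y.1) ∈ B} := by
          rw [Measure.prod_apply hS]
          refine lintegral_congr fun x => ?_
          rw [hphat, Measure.map_apply (measurable_graph_section hf x) hB]
          rfl
      _ = ∫⁻ β, G (α, β) ∂p α := Measure.prod_apply_symm hS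
  calc (m ⊗ₘ κ).bind phat B
      = ∫⁻ α, ∫⁻ x, phat (α, x) B ∂κ α ∂m := by
        rw [Measure.bind_apply hB phat.aemeasurable,
          Measure.lintegral_compProd (phat.measurable_coe hB)]
    _ = ∫⁻ α, ∫⁻ β, G (α, β) ∂p α ∂m := lintegral_congr fubini
    _ = ∫⁻ c, G c ∂(m ⊗ₘ p) := (Measure.lintegral_compProd hG).symm
    _ = ∫⁻ c, G c.swap ∂(m ⊗ₘ q) := by rw [hdual, lintegral_map hG measurable_swap]
    _ = ∫⁻ α, ∫⁻ β, G (β, α) ∂q α ∂m := Measure.lintegral_compProd (hG.comp measurable_swap)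
    _ = (m ⊗ₘ averagedPushforward q κ f) B := by
        rw [Measure.compProd_apply hB]
        exact lintegral_congr fun α =>
          (averagedPushforward_apply' hf α (measurable_prodMk_left hB)).symm

end

theorem stationary_iff_disintegration_general {E M : Type*}
    [MeasurableSpace E] [MeasurableSpace M] [StandardBorelSpace M]
    (p q : ProbabilityTheory.Kernel E E) [IsMarkovKernel p] [IsMarkovKernel q]
    (m : Measure E) [IsProbabilityMeasure m]
    (hdual : ∀ A B : Set E, MeasurableSet A → MeasurableSet B →
      ∫⁻ α in B, p α A ∂m = ∫⁻ β in A, q β B ∂m)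
    (f : E → M → M) (hf : Measurable fun z : E × M => f z.1 z.2)
    (phat : ProbabilityTheory.Kernel (E × M) (E × M))
    (hphat : ∀ (z : E × M) (B : Set (E × M)), MeasurableSet B →
      phat z B = ∫⁻ β, B.indicator (fun _ => (1 : ℝ≥0∞)) (β, f β z.2) ∂(p z.1))
    (ν : Measure (E × M))
    (να : E → Measure M) (hdis : IsDisint m ν να) :
    (∀ B : Set (E × M), MeasurableSet B → ν B = ∫⁻ z, phat z B ∂ν) ↔
      (∀ᵐ α ∂m, να α = (q α : Measure E).bind (fun β => (να β).map (f α))) := by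
  have hphat_map : ∀ z : E × M, phat z = (p z.1).map fun β => (β, f β z.2) := fun z =>
    Measure.eq_map_of_apply_eq_lintegral_indicator (measurable_graph_section hf z.2) (hphat z)
  have hstep := bind_compProd_eq_compProd_averagedPushforward (κ := hdis.kernel) hf
    (Measure.compProd_eq_map_swap_of_setLIntegral_eq hdual) hphat_map
  rw [← Measure.bind_eq_self_iff, hdis.eq_compProd, hstep, Kernel.compProd_eq_iff]
  simp only [Filter.EventuallyEq, averagedPushforward_apply hf, IsDisint.kernel_apply, eq_comm]

/-- A probability measure `ν` on `E × M` with first marginal `m` is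
stationary for `p̂` iff `ν_α = ∫ (f_α)_* ν_β q(α,dβ)` for `m`-almost every `α`. -/
theorem stationary_iff_disintegration {E M : Type*}
    [MeasurableSpace E] [StandardBorelSpace E] [MeasurableSpace M] [StandardBorelSpace M]
    (p q : ProbabilityTheory.Kernel E E) [IsMarkovKernel p] [IsMarkovKernel q]
    (m : Measure E) [IsProbabilityMeasure m]
    (hstat : ∀ A : Set E, MeasurableSet A → m A = ∫⁻ α, p α A ∂m)
    (huniq : ∀ m' : Measure E, IsProbabilityMeasure m' →
      (∀ A : Set E, MeasurableSet A → m' A = ∫⁻ α, p α A ∂m') → m' = m)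
    (hdual : ∀ A B : Set E, MeasurableSet A → MeasurableSet B →
      ∫⁻ α in B, p α A ∂m = ∫⁻ β in A, q β B ∂m)
    (f : E → M → M) (hf : Measurable fun z : E × M => f z.1 z.2)
    (phat : ProbabilityTheory.Kernel (E × M) (E × M)) [IsMarkovKernel phat]
    (hphat : ∀ (z : E × M) (B : Set (E × M)), MeasurableSet B →
      phat z B = ∫⁻ β, B.indicator (fun _ => (1 : ℝ≥0∞)) (β, f β z.2) ∂(p z.1))
    (ν : Measure (E × M)) [IsProbabilityMeasure ν]
    (hmarg : ν.map Prod.fst = m)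
    (να : E → Measure M) (hdis : IsDisint m ν να) :
    (∀ B : Set (E × M), MeasurableSet B → ν B = ∫⁻ z, phat z B ∂ν) ↔
      (∀ᵐ α ∂m, να α = (q α : Measure E).bind (fun β => (να β).map (f α))) :=
  stationary_iff_disintegration_general p q m hdual f hf phat hphat ν να hdis
end

section
/- Let Σ = E^ℕ with the Markov measure ℙ associated to a transition probability p and its stationary measure m, and let q be the transition probability in duality with p relative to m. Then for all measurable maps u: Σ → [0,∞) and g: E → [0,∞), one has ∫ u(σ(ω)) g(ω₀) dℙ(ω) = ∫ u(ω) (∫ g(β) q(ω₀, dβ)) dℙ(ω), where σ is the shift map on Σ. -/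
open MeasureTheory ProbabilityTheory ENNReal

/-- Probability, starting from a point, that the next `n` steps of the chain driven by the
kernel `p` successively fall in the sets `A 0, A 1, …`. -/
noncomputable def chainProb {E : Type*} [MeasurableSpace E] (p : ProbabilityTheory.Kernel E E) :
    ℕ → (ℕ → Set E) → E → ℝ≥0∞
  | 0, _, _ => 1
  | (n + 1), A, α => ∫⁻ β in A 0, chainProb p n (fun i => A (i + 1)) β ∂(p α)

/-- `P` is the Markov measure on `Σ = E^ℕ` associated with the transition probability `p`
and initial distribution `m`: the finite-dimensional distributions are the ones of the
homogeneous Markov chain with transition `p` started from `m`. -/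
def IsMarkovMeasure {E : Type*} [MeasurableSpace E] (p : ProbabilityTheory.Kernel E E)
    (m : Measure E) (P : Measure (ℕ → E)) : Prop :=
  ∀ (n : ℕ) (A : ℕ → Set E), (∀ i, MeasurableSet (A i)) →
    P {ω | ∀ i ≤ n, ω i ∈ A i} = ∫⁻ α in A 0, chainProb p n (fun i => A (i + 1)) α ∂m

/-! Under `P`, the pair `(σω, ω 0)` has law `P ⊗ₘ q(ω 0, ·)`; the theorem is this identity
integrated against `u ⊗ g`. Both sides are finite measures on `Σ × E`, so it suffices to compare
them on rectangles `{ω | ∀ i ≤ n, ω i ∈ A i} ×ˢ B`. There the left side is the mass of an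
`(n + 1)`-step cylinder starting in `B`, and the duality relation moves its first transition,
from `B` into `A 0` under `p`, to a density `q(·, B)` on `A 0`. -/

section

open Set MeasurableSpace

theorem pi_finset_eq_pi_Iic (s : Finset ℕ) {α : Type*} (t : ℕ → Set α) :
    (s : Set ℕ).pi t = (Iic (s.sup id)).pi (s.piecewise t fun _ => univ) := by
  ext ω
  simp only [mem_pi, Finset.mem_coe, mem_Iic]
  constructor
  · intro h i _
    by_cases hi : i ∈ s <;> simp [hi, h i]
  · intro h i hi
    simpa [hi] using h i (Finset.le_sup (f := id) hi)

variable {E : Type*} [MeasurableSpace E]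

theorem measurable_chainProb (p : Kernel E E) [IsSFiniteKernel p] :
    ∀ (n : ℕ) (A : ℕ → Set E), (∀ i, MeasurableSet (A i)) → Measurable (chainProb p n A)
  | 0, _, _ => measurable_const
  | n + 1, A, hA =>
    (measurable_chainProb p n (fun i => A (i + 1)) fun i => hA (i + 1)).setLIntegral_kernel (hA 0)

theorem measurableSet_pi_Iic {n : ℕ} {A : ℕ → Set E} (hA : ∀ i, MeasurableSet (A i)) :
    MeasurableSet ((Iic n).pi A) :=
  .pi (to_countable _) fun i _ => hA i

theorem measurable_shift_prodMk_eval_zero :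
    Measurable fun ω : ℕ → E => ((fun n => ω (n + 1)), ω 0) :=
  (measurable_pi_lambda _ fun n => measurable_pi_apply (n + 1)).prodMk (measurable_pi_apply 0)

theorem setLIntegral_setLIntegral_eq_of_dual {p q : Kernel E E} {m : Measure E}
    (hdual : ∀ A B : Set E, MeasurableSet A → MeasurableSet B →
      ∫⁻ α in B, p α A ∂m = ∫⁻ β in A, q β B ∂m)
    {A B : Set E} (hA : MeasurableSet A) (hB : MeasurableSet B)
    {h : E → ℝ≥0∞} (hh : Measurable h) :
    ∫⁻ α in B, ∫⁻ β in A, h β ∂(p α) ∂m = ∫⁻ β in A, q β B * h β ∂m := by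
  have hbind :
      (m.restrict B).bind (p.restrict hA) = (m.withDensity fun β => q β B).restrict A := by
    ext C hC
    rw [Measure.bind_apply hC (Kernel.aemeasurable _), Measure.restrict_apply hC,
      withDensity_apply _ (hC.inter hA)]
    simp_rw [Kernel.restrict_apply' _ hA _ hC]
    exact hdual _ B (hC.inter hA) hB
  calc ∫⁻ α in B, ∫⁻ β in A, h β ∂(p α) ∂m
      = ∫⁻ β, h β ∂((m.restrict B).bind (p.restrict hA)) := by
        rw [Measure.lintegral_bind (Kernel.aemeasurable _) hh.aemeasurable]; rfl
    _ = ∫⁻ β in A, q β B * h β ∂m := by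
        rw [hbind, setLIntegral_withDensity_eq_setLIntegral_mul _ (q.measurable_coe hB) hh hA]; rfl

namespace IsMarkovMeasure

variable {p q : Kernel E E} {m : Measure E} {P : Measure (ℕ → E)}

theorem map_eval_zero_restrict_pi_Iic (hP : IsMarkovMeasure p m P) (n : ℕ) {A : ℕ → Set E}
    (hA : ∀ i, MeasurableSet (A i)) :
    (P.restrict ((Iic n).pi A)).map (fun ω => ω 0)
      = (m.restrict (A 0)).withDensity (chainProb p n fun i => A (i + 1)) := by
  ext C hC
  rw [Measure.map_apply (measurable_pi_apply 0) hC,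
    Measure.restrict_apply (measurable_pi_apply 0 hC), withDensity_apply _ hC,
    Measure.restrict_restrict hC]
  have hcyl : (fun ω => ω 0) ⁻¹' C ∩ (Iic n).pi A
      = (Iic n).pi (Function.update A 0 (C ∩ A 0)) := by
    ext ω
    simp only [mem_inter_iff, mem_preimage, mem_pi, mem_Iic]
    constructor
    · rintro ⟨h0, h⟩ (_ | i) hi
      exacts [⟨h0, h 0 hi⟩, by simpa using h _ hi]
    · intro h
      exact ⟨(h 0 n.zero_le).1, fun i hi => by
        rcases i with _ | i
        exacts [(h 0 hi).2, by simpa using h _ hi]⟩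
  have hA' (i : ℕ) : MeasurableSet (Function.update A 0 (C ∩ A 0) i) := by
    rcases i with _ | i
    exacts [by simpa using hC.inter (hA 0), by simpa using hA _]
  rw [hcyl]
  exact (hP n _ hA').trans (by simp)

theorem measure_shift_preimage_pi_Iic_prod [IsSFiniteKernel p]
    (hdual : ∀ A B : Set E, MeasurableSet A → MeasurableSet B →
      ∫⁻ α in B, p α A ∂m = ∫⁻ β in A, q β B ∂m)
    (hP : IsMarkovMeasure p m P) (n : ℕ) {A : ℕ → Set E} (hA : ∀ i, MeasurableSet (A i))
    {B : Set E} (hB : MeasurableSet B) :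
    P ((fun ω => ((fun n => ω (n + 1)), ω 0)) ⁻¹' ((Iic n).pi A ×ˢ B))
      = ∫⁻ ω in (Iic n).pi A, q (ω 0) B ∂P := by
  let A' : ℕ → Set E := fun | 0 => B | i + 1 => A i
  have hA' (i : ℕ) : MeasurableSet (A' i) := by
    rcases i with _ | i
    exacts [hB, hA i]
  have hcyl : (fun ω => ((fun n => ω (n + 1)), ω 0)) ⁻¹' ((Iic n).pi A ×ˢ B)
      = (Iic (n + 1)).pi A' := by
    ext ω
    simp only [mem_preimage, mem_prod, mem_pi, mem_Iic]
    constructor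
    · rintro ⟨h, h0⟩ (_ | i) hi
      exacts [h0, h i (by omega)]
    · intro h
      exact ⟨fun i hi => h (i + 1) (by omega), h 0 (by omega)⟩
  have hchain := measurable_chainProb p n (fun i => A (i + 1)) fun i => hA (i + 1)
  calc P ((fun ω => ((fun n => ω (n + 1)), ω 0)) ⁻¹' ((Iic n).pi A ×ˢ B))
      = ∫⁻ α in B, ∫⁻ β in A 0, chainProb p n (fun i => A (i + 1)) β ∂(p α) ∂m := by
        rw [hcyl]; exact hP (n + 1) A' hA'
    _ = ∫⁻ β in A 0, q β B * chainProb p n (fun i => A (i + 1)) β ∂m :=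
        setLIntegral_setLIntegral_eq_of_dual hdual (hA 0) hB hchain
    _ = ∫⁻ ω in (Iic n).pi A, q (ω 0) B ∂P := by
        rw [← lintegral_map (q.measurable_coe hB) (measurable_pi_apply 0),
          hP.map_eval_zero_restrict_pi_Iic n hA,
          lintegral_withDensity_eq_lintegral_mul _ hchain (q.measurable_coe hB)]
        simp_rw [mul_comm]; rfl

theorem map_shift_prod_eval_zero_eq_compProd [IsSFiniteKernel p] [IsMarkovKernel q]
    [IsFiniteMeasure P]
    (hdual : ∀ A B : Set E, MeasurableSet A → MeasurableSet B →
      ∫⁻ α in B, p α A ∂m = ∫⁻ β in A, q β B ∂m)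
    (hP : IsMarkovMeasure p m P) :
    P.map (fun ω => ((fun n => ω (n + 1)), ω 0))
      = P ⊗ₘ q.comap (fun ω => ω 0) (measurable_pi_apply 0) := by
  have hspan : IsCountablySpanning (squareCylinders fun _ : ℕ => {s : Set E | MeasurableSet s}) :=
    ⟨fun _ => univ, fun _ => ⟨∅, fun _ => univ, fun _ _ => .univ, by simp⟩,
      iUnion_const _⟩
  refine ext_of_generate_finite _
    (generateFrom_eq_prod generateFrom_squareCylinders generateFrom_measurableSet hspan
      isCountablySpanning_measurableSet).symm
    ((isPiSystem_squareCylinders (fun _ => isPiSystem_measurableSet) fun _ => .univ).prod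
      isPiSystem_measurableSet) ?_
    (by simp [Measure.map_apply measurable_shift_prodMk_eval_zero .univ])
  rintro _ ⟨_, ⟨s, t, ht, rfl⟩, B, hB, rfl⟩
  have hA (i : ℕ) : MeasurableSet (s.piecewise t (fun _ => univ) i) := by
    unfold Finset.piecewise
    split_ifs
    exacts [ht i (mem_univ i), .univ]
  rw [pi_finset_eq_pi_Iic,
    Measure.map_apply measurable_shift_prodMk_eval_zero ((measurableSet_pi_Iic hA).prod hB),
    Measure.compProd_apply_prod (measurableSet_pi_Iic hA) hB]
  exact measure_shift_preimage_pi_Iic_prod hdual hP _ hA hB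

end IsMarkovMeasure

end

theorem markov_measure_shift_duality_general {E : Type*} [MeasurableSpace E]
    (p q : ProbabilityTheory.Kernel E E) [IsMarkovKernel p] [IsMarkovKernel q]
    (m : Measure E)
    (hdual : ∀ A B : Set E, MeasurableSet A → MeasurableSet B →
      ∫⁻ α in B, p α A ∂m = ∫⁻ β in A, q β B ∂m)
    (P : Measure (ℕ → E)) [IsProbabilityMeasure P] (hP : IsMarkovMeasure p m P)
    (u : (ℕ → E) → ℝ≥0∞) (hu : Measurable u) (g : E → ℝ≥0∞) (hg : Measurable g) :
    ∫⁻ ω, u (fun n => ω (n + 1)) * g (ω 0) ∂P =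
      ∫⁻ ω, u ω * ∫⁻ β, g β ∂(q (ω 0)) ∂P := by
  have hug : Measurable fun x : (ℕ → E) × E => u x.1 * g x.2 := by fun_prop
  calc ∫⁻ ω, u (fun n => ω (n + 1)) * g (ω 0) ∂P
      = ∫⁻ x, u x.1 * g x.2 ∂(P.map fun ω => ((fun n => ω (n + 1)), ω 0)) :=
        (lintegral_map hug measurable_shift_prodMk_eval_zero).symm
    _ = ∫⁻ ω, ∫⁻ β, u ω * g β ∂(q (ω 0)) ∂P := by
        rw [hP.map_shift_prod_eval_zero_eq_compProd hdual, Measure.lintegral_compProd hug]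
        rfl
    _ = ∫⁻ ω, u ω * ∫⁻ β, g β ∂(q (ω 0)) ∂P := by
        simp_rw [lintegral_const_mul _ hg]

/-- For the Markov measure `ℙ` and the dual kernel `q`:
`∫ u(σω) g(ω₀) dℙ = ∫ u(ω) (∫ g(β) q(ω₀,dβ)) dℙ`. -/
theorem markov_measure_shift_duality {E : Type*} [MeasurableSpace E] [StandardBorelSpace E]
    (p q : ProbabilityTheory.Kernel E E) [IsMarkovKernel p] [IsMarkovKernel q]
    (m : Measure E) [IsProbabilityMeasure m]
    (hstat : ∀ A : Set E, MeasurableSet A → m A = ∫⁻ α, p α A ∂m)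
    (hdual : ∀ A B : Set E, MeasurableSet A → MeasurableSet B →
      ∫⁻ α in B, p α A ∂m = ∫⁻ β in A, q β B ∂m)
    (P : Measure (ℕ → E)) [IsProbabilityMeasure P] (hP : IsMarkovMeasure p m P)
    (u : (ℕ → E) → ℝ≥0∞) (hu : Measurable u) (g : E → ℝ≥0∞) (hg : Measurable g) :
    ∫⁻ ω, u (fun n => ω (n + 1)) * g (ω 0) ∂P =
      ∫⁻ ω, u ω * ∫⁻ β, g β ∂(q (ω 0)) ∂P :=
  markov_measure_shift_duality_general p q m hdual P hP u hu g hg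
end

section
/- If ν ∈ S(φ) is a stationary measure with disintegration {ν_α}, and μ̂ = Ξ(ν) ∈ I₀(φ) is defined via μ_α = ∫ ν_β q(α,dβ), then (f_β)_*μ_β = ν_β for m-almost every β. -/
open MeasureTheory ProbabilityTheory ENNReal

/-- `ν` is a stationary measure of the Markovian random iteration. -/
def IsStationaryRI {E M : Type*} [MeasurableSpace E] [MeasurableSpace M]
    (p : ProbabilityTheory.Kernel E E) (f : E → M → M) (ν : Measure (E × M)) : Prop :=
  ∀ B : Set (E × M), MeasurableSet B →
    ν B = ∫⁻ z, ∫⁻ β, B.indicator (fun _ => (1 : ℝ≥0∞)) (β, f β z.2) ∂(p z.1) ∂ν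
/-! Disintegrate `ν = m ⊗ κ`. Stationarity says that `ν` is the law of `(β, f_β x)` when
`α ∼ m`, `β ∼ p(α, ·)` and `x ∼ κ_α`. Duality replaces the pair `(α, β)` by `β ∼ m`,
`α ∼ q(β, ·)`, so `ν = m ⊗ η` with `η_β = (f_β)_* ∫ κ_α q(β, dα)`. Since `M` is countably
generated, a measure on `E × M` determines its disintegration `m`-a.e., hence `η = κ` `m`-a.e. -/

namespace IsDisint

variable {E M : Type*} [MeasurableSpace E] [MeasurableSpace M]
  {m : Measure E} {ν : Measure (E × M)} {να : E → Measure M}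

def toKernel (h : IsDisint m ν να) : Kernel E M :=
  ⟨να, Measure.measurable_of_measurable_coe _ h.2.1⟩

instance (h : IsDisint m ν να) : IsMarkovKernel h.toKernel := ⟨h.1⟩

lemma compProd_toKernel [IsFiniteMeasure m] (h : IsDisint m ν να) : m ⊗ₘ h.toKernel = ν :=
  Measure.ext_prod fun hA hB => by
    rw [Measure.compProd_apply_prod hA hB, h.2.2 _ _ hA hB]
    rfl

end IsDisint

section

variable {E M : Type*} [MeasurableSpace E] [MeasurableSpace M]

def IsDualKernel (m : Measure E) (p q : Kernel E E) : Prop :=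
  ∀ A B : Set E, MeasurableSet A → MeasurableSet B → ∫⁻ α in B, p α A ∂m = ∫⁻ β in A, q β B ∂m

namespace IsDualKernel

variable {m : Measure E} [IsFiniteMeasure m] {p q : Kernel E E} [IsFiniteKernel p]
  [IsSFiniteKernel q]

lemma compProd_eq_map_swap (hdual : IsDualKernel m p q) : m ⊗ₘ p = (m ⊗ₘ q).map Prod.swap :=
  Measure.ext_prod fun hA hB => by
    rw [Measure.compProd_apply_prod hA hB, Measure.map_apply measurable_swap (hA.prod hB),
      Set.preimage_swap_prod, Measure.compProd_apply_prod hB hA]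
    exact hdual _ _ hB hA

lemma lintegral_lintegral_eq (hdual : IsDualKernel m p q) {G : E × E → ℝ≥0∞}
    (hG : Measurable G) :
    ∫⁻ α, ∫⁻ β, G (α, β) ∂p α ∂m = ∫⁻ β, ∫⁻ α, G (α, β) ∂q β ∂m := by
  rw [← Measure.lintegral_compProd hG, hdual.compProd_eq_map_swap,
    lintegral_map hG measurable_swap,
    Measure.lintegral_compProd (f := fun z => G z.swap) (hG.comp measurable_swap)]
  rfl

end IsDualKernel

/-- `β ↦ (f β)_* ∫ κ α q(β, dα)`, the paper's `(f_β)_* μ_β` for `κ = {ν_α}`; it is built from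
`Kernel.id ×ₖ (κ ∘ₖ q)` so that it is a kernel by construction. -/
noncomputable def pushDualKernel (q : Kernel E E) (κ : Kernel E M) (f : E → M → M) :
    Kernel E M :=
  (Kernel.id ×ₖ (κ ∘ₖ q)).map fun z => f z.1 z.2

variable {m : Measure E} {p q : Kernel E E} {κ : Kernel E M} {f : E → M → M}

instance [IsFiniteKernel q] [IsFiniteKernel κ] : IsFiniteKernel (pushDualKernel q κ f) := by
  unfold pushDualKernel; infer_instance

instance [IsSFiniteKernel q] [IsSFiniteKernel κ] : IsSFiniteKernel (pushDualKernel q κ f) := by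
  unfold pushDualKernel; infer_instance

lemma pushDualKernel_apply [IsSFiniteKernel q] [IsSFiniteKernel κ]
    (hf : Measurable fun z : E × M => f z.1 z.2) (β : E) :
    pushDualKernel q κ f β = ((q β).bind κ).map (f β) := by
  rw [pushDualKernel, Kernel.map_apply _ hf, Kernel.prod_apply, Kernel.id_apply,
    Measure.dirac_prod, Measure.map_map hf measurable_prodMk_left, Kernel.comp_apply]
  rfl

variable [IsFiniteMeasure m] [IsFiniteKernel p] [IsSFiniteKernel q] [IsSFiniteKernel κ]

lemma lintegral_compProd_pushDualKernel (hdual : IsDualKernel m p q)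
    (hf : Measurable fun z : E × M => f z.1 z.2) {g : E × M → ℝ≥0∞} (hg : Measurable g) :
    ∫⁻ z, ∫⁻ β, g (β, f β z.2) ∂p z.1 ∂(m ⊗ₘ κ) = ∫⁻ z, g z ∂(m ⊗ₘ pushDualKernel q κ f) := by
  have hG : Measurable fun ab : E × E => ∫⁻ x, g (ab.2, f ab.2 x) ∂κ ab.1 :=
    Measurable.lintegral_kernel_prod_right' (κ := κ.prodMkRight E)
      (f := fun z : (E × E) × M => g (z.1.2, f z.1.2 z.2)) (by fun_prop)
  have hF : Measurable fun z : E × M => ∫⁻ β, g (β, f β z.2) ∂p z.1 :=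
    Measurable.lintegral_kernel_prod_right' (κ := p.prodMkRight M)
      (f := fun z : (E × M) × E => g (z.2, f z.2 z.1.2)) (by fun_prop)
  calc ∫⁻ z, ∫⁻ β, g (β, f β z.2) ∂p z.1 ∂(m ⊗ₘ κ)
      = ∫⁻ α, ∫⁻ β, ∫⁻ x, g (β, f β x) ∂κ α ∂p α ∂m := by
        rw [Measure.lintegral_compProd hF]
        refine lintegral_congr fun α => ?_
        rw [lintegral_lintegral_swap (by fun_prop)]
    _ = ∫⁻ β, ∫⁻ α, ∫⁻ x, g (β, f β x) ∂κ α ∂q β ∂m := hdual.lintegral_lintegral_eq hG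
    _ = ∫⁻ β, ∫⁻ y, g (β, y) ∂pushDualKernel q κ f β ∂m := by
        refine lintegral_congr fun β => ?_
        rw [pushDualKernel_apply hf, lintegral_map (by fun_prop) (by fun_prop),
          Measure.lintegral_bind κ.measurable.aemeasurable (by fun_prop)]
    _ = ∫⁻ z, g z ∂(m ⊗ₘ pushDualKernel q κ f) := (Measure.lintegral_compProd hg).symm

lemma compProd_pushDualKernel_eq_of_isStationaryRI (hdual : IsDualKernel m p q)
    (hf : Measurable fun z : E × M => f z.1 z.2) (hstat : IsStationaryRI p f (m ⊗ₘ κ)) :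
    m ⊗ₘ pushDualKernel q κ f = m ⊗ₘ κ := by
  ext B hB
  rw [hstat B hB, lintegral_compProd_pushDualKernel hdual hf
    (g := B.indicator fun _ => 1) (measurable_const.indicator hB)]
  exact (lintegral_indicator_one hB).symm

end

theorem pushforward_of_dual_bind_eq_general {E M : Type*}
    [MeasurableSpace E] [MeasurableSpace M] [StandardBorelSpace M]
    (p q : ProbabilityTheory.Kernel E E) [IsMarkovKernel p] [IsMarkovKernel q]
    (m : Measure E) [IsProbabilityMeasure m]
    (hdual : ∀ A B : Set E, MeasurableSet A → MeasurableSet B →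
      ∫⁻ α in B, p α A ∂m = ∫⁻ β in A, q β B ∂m)
    (f : E → M → M) (hf : Measurable fun z : E × M => f z.1 z.2)
    (ν : Measure (E × M))
    (να : E → Measure M) (hdis : IsDisint m ν να)
    (hstatν : IsStationaryRI p f ν) :
    ∀ᵐ β ∂m, ((q β : Measure E).bind να).map (f β) = να β := by
  rw [← hdis.compProd_toKernel] at hstatν
  have hcompProd := compProd_pushDualKernel_eq_of_isStationaryRI hdual hf hstatν
  filter_upwards [Kernel.ae_eq_of_compProd_eq hcompProd] with β hβ
  rwa [pushDualKernel_apply hf] at hβ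

/-- If `ν ∈ S(φ)` has disintegration `{ν_α}` and `μ_α = ∫ ν_β q(α,dβ)`,
then `(f_β)_* μ_β = ν_β` for `m`-almost every `β`. -/
theorem pushforward_of_dual_bind_eq {E M : Type*}
    [MeasurableSpace E] [StandardBorelSpace E] [MeasurableSpace M] [StandardBorelSpace M]
    (p q : ProbabilityTheory.Kernel E E) [IsMarkovKernel p] [IsMarkovKernel q]
    (m : Measure E) [IsProbabilityMeasure m]
    (hstat : ∀ A : Set E, MeasurableSet A → m A = ∫⁻ α, p α A ∂m)
    (huniq : ∀ m' : Measure E, IsProbabilityMeasure m' →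
      (∀ A : Set E, MeasurableSet A → m' A = ∫⁻ α, p α A ∂m') → m' = m)
    (hdual : ∀ A B : Set E, MeasurableSet A → MeasurableSet B →
      ∫⁻ α in B, p α A ∂m = ∫⁻ β in A, q β B ∂m)
    (f : E → M → M) (hf : Measurable fun z : E × M => f z.1 z.2)
    (ν : Measure (E × M)) [IsProbabilityMeasure ν]
    (να : E → Measure M) (hdis : IsDisint m ν να)
    (hstatν : IsStationaryRI p f ν) :
    ∀ᵐ β ∂m, ((q β : Measure E).bind να).map (f β) = να β :=
  pushforward_of_dual_bind_eq_general p q m hdual f hf ν να hdis hstatν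
end

section
/- If the pair (p,m) is bounded with constant C (i.e. C ≤ dp_α/dm ≤ C⁻¹ for all α, with 0 < C ≤ 1), then the transition probability q in duality with p relative to m is given by q(β,A) = ∫_A k(α,β) dm(α), where k(α,β) = (dp_α/dm)(β); consequently C ≤ dq_α/dm ≤ C⁻¹ for m-almost every α. -/
open MeasureTheory ProbabilityTheory ENNReal

/-! Integrating the density `k α β = (dp_α/dm)(β)` first in `β` over `B` and then in `α` over
`A` gives `∫_A p(α, B) dm(α)`; by Tonelli this equals `∫_B (∫_A k(α, β) dm(α)) dm(β)`, while
duality identifies it with `∫_B q(β, A) dm(β)`. As `B` is arbitrary, `q(β, A) = ∫_A k(·, β) dm`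
for `m`-a.e. `β`, and the bounds on `k` integrate to the bounds on `q(·, A)`. -/

section

variable {E : Type*} [MeasurableSpace E]

theorem setLIntegral_kernel_withDensity_eq_swap (p : Kernel E E) {μ ν : Measure E}
    [SFinite μ] [SFinite ν] {k : E → E → ℝ≥0∞} (hk : Measurable fun z : E × E => k z.1 z.2)
    (hdens : ∀ α, (p α : Measure E) = ν.withDensity (k α))
    {A B : Set E} (hB : MeasurableSet B) :
    ∫⁻ α in A, p α B ∂μ = ∫⁻ β in B, ∫⁻ α in A, k α β ∂μ ∂ν := by
  calc ∫⁻ α in A, p α B ∂μ = ∫⁻ α in A, ∫⁻ β in B, k α β ∂ν ∂μ := by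
        simp only [hdens, withDensity_apply _ hB]
    _ = ∫⁻ β in B, ∫⁻ α in A, k α β ∂μ ∂ν := lintegral_lintegral_swap hk.aemeasurable

theorem ae_kernel_apply_eq_setLIntegral_of_dual (p q : Kernel E E) {μ ν : Measure E}
    [SFinite μ] [SigmaFinite ν] {k : E → E → ℝ≥0∞}
    (hk : Measurable fun z : E × E => k z.1 z.2)
    (hdens : ∀ α, (p α : Measure E) = ν.withDensity (k α))
    {A : Set E} (hA : MeasurableSet A)
    (hdual : ∀ B : Set E, MeasurableSet B → ∫⁻ α in A, p α B ∂μ = ∫⁻ β in B, q β A ∂ν) :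
    ∀ᵐ β ∂ν, q β A = ∫⁻ α in A, k α β ∂μ := by
  have hk_swap : Measurable fun z : E × E => k z.2 z.1 := hk.comp measurable_swap
  refine ae_eq_of_forall_setLIntegral_eq_of_sigmaFinite (q.measurable_coe hA)
    (hk_swap.lintegral_prod_right' (ν := μ.restrict A)) fun B hB _ => ?_
  rw [← hdual B hB, setLIntegral_kernel_withDensity_eq_swap p hk hdens hB]

theorem setLIntegral_mem_Icc_of_forall_mem_Icc {μ : Measure E} {f : E → ℝ≥0∞} {a b : ℝ≥0∞}
    (hf : ∀ x, a ≤ f x ∧ f x ≤ b) (A : Set E) :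
    a * μ A ≤ ∫⁻ x in A, f x ∂μ ∧ ∫⁻ x in A, f x ∂μ ≤ b * μ A := by
  constructor
  · calc a * μ A = ∫⁻ _ in A, a ∂μ := (setLIntegral_const A a).symm
      _ ≤ ∫⁻ x in A, f x ∂μ := lintegral_mono fun x => (hf x).1
  · calc ∫⁻ x in A, f x ∂μ ≤ ∫⁻ _ in A, b ∂μ := lintegral_mono fun x => (hf x).2
      _ = b * μ A := setLIntegral_const A b

end

theorem dual_kernel_of_bounded_pair_general {E : Type*} [MeasurableSpace E]
    (p q : ProbabilityTheory.Kernel E E)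
    (m : Measure E) [IsProbabilityMeasure m]
    (hdual : ∀ A B : Set E, MeasurableSet A → MeasurableSet B →
      ∫⁻ α in B, p α A ∂m = ∫⁻ β in A, q β B ∂m)
    (C : ℝ≥0∞)
    (k : E → E → ℝ≥0∞) (hk : Measurable fun z : E × E => k z.1 z.2)
    (hdens : ∀ α, (p α : Measure E) = m.withDensity (k α))
    (hbound : ∀ α β, C ≤ k α β ∧ k α β ≤ C⁻¹) :
    (∀ A : Set E, MeasurableSet A → ∀ᵐ β ∂m, q β A = ∫⁻ α in A, k α β ∂m) ∧
    (∀ A : Set E, MeasurableSet A → ∀ᵐ α ∂m, C * m A ≤ q α A ∧ q α A ≤ C⁻¹ * m A) := by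
  have hq : ∀ A : Set E, MeasurableSet A → ∀ᵐ β ∂m, q β A = ∫⁻ α in A, k α β ∂m :=
    fun A hA => ae_kernel_apply_eq_setLIntegral_of_dual p q hk hdens hA
      fun B hB => hdual B A hB hA
  refine ⟨hq, fun A hA => ?_⟩
  filter_upwards [hq A hA] with α hα
  rw [hα]
  exact setLIntegral_mem_Icc_of_forall_mem_Icc (fun β => hbound β α) A

/-- If the pair `(p,m)` is bounded with constant `C`
(`C ≤ dp_α/dm = k α ≤ C⁻¹`), then the dual transition probability `q` is given by
`q(β,A) = ∫_A k(α,β) dm(α)`, and consequently `C ≤ dq_α/dm ≤ C⁻¹` for `m`-a.e. `α`. -/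
theorem dual_kernel_of_bounded_pair {E : Type*} [MeasurableSpace E] [StandardBorelSpace E]
    (p q : ProbabilityTheory.Kernel E E) [IsMarkovKernel p] [IsMarkovKernel q]
    (m : Measure E) [IsProbabilityMeasure m]
    (hstat : ∀ A : Set E, MeasurableSet A → m A = ∫⁻ α, p α A ∂m)
    (hdual : ∀ A B : Set E, MeasurableSet A → MeasurableSet B →
      ∫⁻ α in B, p α A ∂m = ∫⁻ β in A, q β B ∂m)
    (C : ℝ≥0∞) (hC0 : 0 < C) (hC1 : C ≤ 1)
    (k : E → E → ℝ≥0∞) (hk : Measurable fun z : E × E => k z.1 z.2)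
    (hdens : ∀ α, (p α : Measure E) = m.withDensity (k α))
    (hbound : ∀ α β, C ≤ k α β ∧ k α β ≤ C⁻¹) :
    (∀ A : Set E, MeasurableSet A → ∀ᵐ β ∂m, q β A = ∫⁻ α in A, k α β ∂m) ∧
    (∀ A : Set E, MeasurableSet A → ∀ᵐ α ∂m, C * m A ≤ q α A ∧ q α A ≤ C⁻¹ * m A) :=
  dual_kernel_of_bounded_pair_general p q m hdual C k hk hdens hbound
end

section
/- Let φ be a bounded Markovian random iteration with constant C, let ν ∈ S(φ) be a stationary measure, and let μ̂ = Ξ(ν) be the corresponding F-invariant measure. Then C·μ̂ ≤ ℙ × (Π₂)_*ν ≤ C⁻¹·μ̂, where Π₂(α,x) = x is the projection onto M. In particular μ̂ and ℙ × (Π₂)_*ν are mutually absolutely continuous. -/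
open MeasureTheory ProbabilityTheory ENNReal

/-!
By duality, `q β` and `m.withDensity (k · β)` give the same measure `m ⊗ₘ ·` on rectangles, and
disintegrations over a standard Borel space are unique, so `q β` has density `k · β` for `m`-a.e.
`β`; hence `C • q β ≤ m ≤ C⁻¹ • q β`. Averaging the fibres `ν_β` against these measures gives
`C • μ_α ≤ (Π₂)_*ν ≤ C⁻¹ • μ_α` for a.e. `α`, because `(Π₂)_*ν = ∫ ν_β dm`. Since `ω₀` is
`m`-distributed under `ℙ`, these fibrewise bounds hold `ℙ`-a.e. for `μ̂ = ℙ ⊗ μ_{ω₀}`, and integrating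
them over `ℙ` compares `μ̂` with `ℙ × (Π₂)_*ν`.
-/

namespace MeasureTheory.Measure

variable {α β : Type*} [MeasurableSpace α] [MeasurableSpace β]

lemma smul_withDensity_le_self {μ : Measure α} {f : α → ℝ≥0∞} {c : ℝ≥0∞} (hf : Measurable f)
    (h : ∀ᵐ a ∂μ, c * f a ≤ 1) : c • μ.withDensity f ≤ μ := by
  rw [← withDensity_smul c hf]
  exact (withDensity_mono h).trans_eq withDensity_one

lemma le_smul_withDensity_self {μ : Measure α} {f : α → ℝ≥0∞} {c : ℝ≥0∞} (hf : Measurable f)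
    (h : ∀ᵐ a ∂μ, 1 ≤ c * f a) : μ ≤ c • μ.withDensity f := by
  rw [← withDensity_smul c hf]
  exact withDensity_one.symm.trans_le (withDensity_mono h)

lemma comp_mono {μ ν : Measure α} (κ : Kernel α β) (h : μ ≤ ν) : κ ∘ₘ μ ≤ κ ∘ₘ ν := by
  refine Measure.le_iff.2 fun s hs => ?_
  rw [bind_apply hs κ.aemeasurable, bind_apply hs κ.aemeasurable]
  exact lintegral_mono' h le_rfl

lemma smul_compProd_le_smul_compProd {μ : Measure α} [SFinite μ] {κ η : Kernel α β}
    [IsSFiniteKernel κ] [IsSFiniteKernel η] {c d : ℝ≥0∞} (h : ∀ᵐ a ∂μ, c • κ a ≤ d • η a) :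
    c • (μ ⊗ₘ κ) ≤ d • (μ ⊗ₘ η) := by
  refine Measure.le_iff.2 fun s hs => ?_
  simp only [smul_apply, smul_eq_mul, compProd_apply hs]
  rw [← lintegral_const_mul _ (κ.measurable_kernel_prodMk_left hs),
    ← lintegral_const_mul _ (η.measurable_kernel_prodMk_left hs)]
  refine lintegral_mono_ae ?_
  filter_upwards [h] with a ha
  exact Measure.le_iff.1 ha _ (measurable_prodMk_left hs)

lemma eq_compProd_of_apply_prod {ρ : Measure (α × β)} {μ : Measure α} [IsFiniteMeasure μ]
    {κ : Kernel α β} [IsFiniteKernel κ]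
    (h : ∀ (A : Set α) (B : Set β), MeasurableSet A → MeasurableSet B →
      ρ (A ×ˢ B) = ∫⁻ a in A, κ a B ∂μ) :
    ρ = μ ⊗ₘ κ := by
  refine (ext_of_generate_finite _ generateFrom_prod.symm isPiSystem_prod ?_ ?_).symm
  · rintro _ ⟨A, hA, B, hB, rfl⟩
    rw [h A B hA hB, compProd_apply_prod hA hB]
  · rw [← Set.univ_prod_univ, h _ _ .univ .univ, compProd_apply_prod .univ .univ]

end MeasureTheory.Measure

section Duality

variable {E : Type*} [MeasurableSpace E] {p q : Kernel E E} {m : Measure E} {k : E → E → ℝ≥0∞}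

lemma ae_eq_withDensity_of_dual [MeasurableSpace.CountablyGenerated E] [IsFiniteMeasure m]
    [IsFiniteKernel q] {c : ℝ≥0∞} (hc : c ≠ ∞) (hk : Measurable fun z : E × E => k z.1 z.2)
    (hk_le : ∀ α β, k α β ≤ c) (hdens : ∀ α, p α = m.withDensity (k α))
    (hdual : ∀ A B : Set E, MeasurableSet A → MeasurableSet B →
      ∫⁻ α in B, p α A ∂m = ∫⁻ β in A, q β B ∂m) :
    ∀ᵐ β ∂m, q β = m.withDensity fun α => k α β := by
  have hk' : Measurable (Function.uncurry fun β α => k α β) := hk.comp measurable_swap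
  let κ := (Kernel.const E m).withDensity fun β α => k α β
  have : IsFiniteKernel κ :=
    Kernel.isFiniteKernel_withDensity_of_bounded _ hc fun β α => hk_le α β
  have hκ (β : E) : κ β = m.withDensity fun α => k α β := by
    rw [Kernel.withDensity_apply _ hk', Kernel.const_apply]
  have hcompProd : m ⊗ₘ κ = m ⊗ₘ q := by
    refine Measure.eq_compProd_of_apply_prod fun A B hA hB => ?_
    calc (m ⊗ₘ κ) (A ×ˢ B) = ∫⁻ β in A, ∫⁻ α in B, k α β ∂m ∂m := by
          simp_rw [Measure.compProd_apply_prod hA hB, hκ, withDensity_apply _ hB]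
      _ = ∫⁻ α in B, ∫⁻ β in A, k α β ∂m ∂m := lintegral_lintegral_swap hk'.aemeasurable
      _ = ∫⁻ β in A, q β B ∂m := by
          simp_rw [← hdual A B hA hB, hdens, withDensity_apply _ hA]
  filter_upwards [Kernel.ae_eq_of_compProd_eq hcompProd] with β hβ
  rw [← hβ, hκ]

lemma ae_smul_le_and_le_inv_smul_of_dual [MeasurableSpace.CountablyGenerated E]
    [IsFiniteMeasure m] [IsFiniteKernel q] {C : ℝ≥0∞} (hC0 : C ≠ 0) (hC : C ≠ ∞)
    (hk : Measurable fun z : E × E => k z.1 z.2) (hbound : ∀ α β, C ≤ k α β ∧ k α β ≤ C⁻¹)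
    (hdens : ∀ α, p α = m.withDensity (k α))
    (hdual : ∀ A B : Set E, MeasurableSet A → MeasurableSet B →
      ∫⁻ α in B, p α A ∂m = ∫⁻ β in A, q β B ∂m) :
    ∀ᵐ β ∂m, C • q β ≤ m ∧ m ≤ C⁻¹ • q β := by
  filter_upwards [ae_eq_withDensity_of_dual (inv_ne_top.2 hC0) hk (fun α β => (hbound α β).2)
    hdens hdual] with β hβ
  have hkβ : Measurable fun α => k α β := hk.comp (measurable_id.prodMk measurable_const)
  rw [hβ]
  refine ⟨Measure.smul_withDensity_le_self hkβ (.of_forall fun α => ?_),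
    Measure.le_smul_withDensity_self hkβ (.of_forall fun α => ?_)⟩
  · calc C * k α β ≤ C * C⁻¹ := by gcongr; exact (hbound α β).2
      _ ≤ 1 := ENNReal.mul_inv_le_one C
  · calc 1 = C⁻¹ * C := (ENNReal.inv_mul_cancel hC0 hC).symm
      _ ≤ C⁻¹ * k α β := by gcongr; exact (hbound α β).1

end Duality

lemma IsMarkovMeasure.map_eval_zero {E : Type*} [MeasurableSpace E] {p : Kernel E E}
    {m : Measure E} {P : Measure (ℕ → E)} (hP : IsMarkovMeasure p m P) :
    P.map (fun ω => ω 0) = m := by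
  ext A hA
  have hcyl : {ω : ℕ → E | ∀ i ≤ 0, ω i ∈ A} = (fun ω => ω 0) ⁻¹' A := by
    simp [Set.preimage]
  rw [Measure.map_apply (measurable_pi_apply 0) hA, ← hcyl, hP 0 (fun _ => A) fun _ => hA]
  simp [chainProb]

namespace IsDisint

variable {E M : Type*} [MeasurableSpace E] [MeasurableSpace M] {m : Measure E}
  {ν : Measure (E × M)} {να : E → Measure M}

lemma measurable (h : IsDisint m ν να) : Measurable να :=
  Measure.measurable_of_measurable_coe _ h.2.1

lemma map_snd_eq_bind (h : IsDisint m ν να) : ν.map Prod.snd = m.bind να := by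
  ext B hB
  rw [Measure.map_apply measurable_snd hB, Measure.bind_apply hB h.measurable.aemeasurable,
    ← Set.univ_prod, h.2.2 _ _ .univ hB, Measure.restrict_univ]

end IsDisint

theorem bounded_comparison_general {E M : Type*}
    [MeasurableSpace E] [StandardBorelSpace E] [MeasurableSpace M]
    (p q : ProbabilityTheory.Kernel E E) [IsMarkovKernel q]
    (m : Measure E) [IsProbabilityMeasure m]
    (hdual : ∀ A B : Set E, MeasurableSet A → MeasurableSet B →
      ∫⁻ α in B, p α A ∂m = ∫⁻ β in A, q β B ∂m)
    (C : ℝ≥0∞) (hC0 : 0 < C) (hC1 : C ≤ 1)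
    (k : E → E → ℝ≥0∞) (hk : Measurable fun z : E × E => k z.1 z.2)
    (hdens : ∀ α, (p α : Measure E) = m.withDensity (k α))
    (hbound : ∀ α β, C ≤ k α β ∧ k α β ≤ C⁻¹)
    (P : Measure (ℕ → E)) [IsProbabilityMeasure P] (hP : IsMarkovMeasure p m P)
    (ν : Measure (E × M))
    (να : E → Measure M) (hdis : IsDisint m ν να)
    (μhat : Measure ((ℕ → E) × M))
    (hμdis : ∀ (A : Set (ℕ → E)) (B : Set M), MeasurableSet A → MeasurableSet B →
      μhat (A ×ˢ B) = ∫⁻ ω in A, ((q (ω 0) : Measure E).bind να) B ∂P) :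
    C • μhat ≤ P.prod (ν.map Prod.snd) ∧ P.prod (ν.map Prod.snd) ≤ C⁻¹ • μhat ∧
      μhat ≪ P.prod (ν.map Prod.snd) ∧ P.prod (ν.map Prod.snd) ≪ μhat := by
  have hC : C ≠ ∞ := ne_top_of_le_ne_top one_ne_top hC1
  let νK : Kernel E M := ⟨να, hdis.measurable⟩
  have : IsMarkovKernel νK := ⟨hdis.1⟩
  have heval : Measurable fun ω : ℕ → E => ω 0 := measurable_pi_apply 0
  let κ : Kernel (ℕ → E) M := (νK ∘ₖ q).comap (fun ω => ω 0) heval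
  have hμhat : μhat = P ⊗ₘ κ := Measure.eq_compProd_of_apply_prod hμdis
  have hνM : ν.map Prod.snd = νK ∘ₘ m := hdis.map_snd_eq_bind
  have hfiber : ∀ᵐ ω ∂P, C • κ ω ≤ νK ∘ₘ m ∧ νK ∘ₘ m ≤ C⁻¹ • κ ω := by
    have hdualP : ∀ᵐ ω ∂P, C • q (ω 0) ≤ m ∧ m ≤ C⁻¹ • q (ω 0) := by
      refine ae_of_ae_map (p := fun α => C • q α ≤ m ∧ m ≤ C⁻¹ • q α) heval.aemeasurable ?_
      rw [hP.map_eval_zero]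
      exact ae_smul_le_and_le_inv_smul_of_dual hC0.ne' hC hk hbound hdens hdual
    filter_upwards [hdualP] with ω hω
    simp only [κ, Kernel.comap_apply, Kernel.comp_apply, ← Measure.comp_smul]
    exact ⟨Measure.comp_mono νK hω.1, Measure.comp_mono νK hω.2⟩
  have hle : C • μhat ≤ P.prod (ν.map Prod.snd) := by
    rw [hνM, hμhat, ← Measure.compProd_const]
    refine (Measure.smul_compProd_le_smul_compProd (d := 1) ?_).trans_eq (one_smul _ _)
    filter_upwards [hfiber] with ω hω
    simpa using hω.1
  have hge : P.prod (ν.map Prod.snd) ≤ C⁻¹ • μhat := by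
    rw [hνM, hμhat, ← Measure.compProd_const]
    refine (one_smul _ _).symm.trans_le (Measure.smul_compProd_le_smul_compProd (c := 1) ?_)
    filter_upwards [hfiber] with ω hω
    simpa using hω.2
  exact ⟨hle, hge, (Measure.absolutelyContinuous_smul hC0.ne').trans
    (Measure.absolutelyContinuous_of_le hle), Measure.absolutelyContinuous_of_le_smul hge⟩

/-- For a bounded Markovian random iteration with constant `C`, a
stationary measure `ν ∈ S(φ)` and its corresponding invariant measure `μ̂ = Ξ(ν)`
(first marginal `ℙ`, disintegration `μ̂_ω = μ_{ω₀}` with `μ_α = ∫ ν_β q(α,dβ)`), one has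
`C·μ̂ ≤ ℙ × (Π₂)_*ν ≤ C⁻¹·μ̂`; in particular the two measures are mutually absolutely
continuous. -/
theorem bounded_comparison {E M : Type*}
    [MeasurableSpace E] [StandardBorelSpace E] [MeasurableSpace M] [StandardBorelSpace M]
    (p q : ProbabilityTheory.Kernel E E) [IsMarkovKernel p] [IsMarkovKernel q]
    (m : Measure E) [IsProbabilityMeasure m]
    (hstat : ∀ A : Set E, MeasurableSet A → m A = ∫⁻ α, p α A ∂m)
    (huniq : ∀ m' : Measure E, IsProbabilityMeasure m' →
      (∀ A : Set E, MeasurableSet A → m' A = ∫⁻ α, p α A ∂m') → m' = m)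
    (hdual : ∀ A B : Set E, MeasurableSet A → MeasurableSet B →
      ∫⁻ α in B, p α A ∂m = ∫⁻ β in A, q β B ∂m)
    (C : ℝ≥0∞) (hC0 : 0 < C) (hC1 : C ≤ 1)
    (k : E → E → ℝ≥0∞) (hk : Measurable fun z : E × E => k z.1 z.2)
    (hdens : ∀ α, (p α : Measure E) = m.withDensity (k α))
    (hbound : ∀ α β, C ≤ k α β ∧ k α β ≤ C⁻¹)
    (f : E → M → M) (hf : Measurable fun z : E × M => f z.1 z.2)
    (P : Measure (ℕ → E)) [IsProbabilityMeasure P] (hP : IsMarkovMeasure p m P)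
    (ν : Measure (E × M)) [IsProbabilityMeasure ν]
    (να : E → Measure M) (hdis : IsDisint m ν να) (hstatν : IsStationaryRI p f ν)
    (μhat : Measure ((ℕ → E) × M)) [IsProbabilityMeasure μhat]
    (hmarg : μhat.map Prod.fst = P)
    (hμdis : ∀ (A : Set (ℕ → E)) (B : Set M), MeasurableSet A → MeasurableSet B →
      μhat (A ×ˢ B) = ∫⁻ ω in A, ((q (ω 0) : Measure E).bind να) B ∂P) :
    C • μhat ≤ P.prod (ν.map Prod.snd) ∧ P.prod (ν.map Prod.snd) ≤ C⁻¹ • μhat ∧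
      μhat ≪ P.prod (ν.map Prod.snd) ∧ P.prod (ν.map Prod.snd) ≪ μhat :=
  bounded_comparison_general p q m hdual C hC0 hC1 k hk hdens hbound P hP ν να hdis μhat hμdis
end

section
/- Let φ be a bounded Markovian random iteration of homeomorphisms of the circle S¹ (with constant C), and suppose μ̂ ∈ I₀(φ) is an F-invariant measure with disintegration μ̂_ω = μ_{ω₀} satisfying (f_{ω₀})_*μ̂_ω = μ̂_{σ(ω)} for ℙ-almost every ω. Then the map α ↦ μ_α is m-almost everywhere constant equal to some probability measure μ on S¹, and (f_α)_*μ = μ for m-almost every α. -/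
open MeasureTheory ProbabilityTheory ENNReal

def skewF {E M : Type*} (f : E → M → M) (z : (ℕ → E) × M) : (ℕ → E) × M :=
  (fun n => z.1 (n + 1), f (z.1 0) z.2)

/-! Since `p α ≥ C • m` with `C > 0`, the law `m ⊗ₘ p` of `(ω₀, ω₁)` dominates `m ⊗ m`, so the
invariance identity `(f_α)_* μ_α = μ_β` transfers from `ℙ`-a.e. `ω` to `m ⊗ m`-a.e. pair `(α, β)`.
An identity `u α = v β` holding for almost every pair forces `u` and `v` to be a.e. equal to one
common constant `μ`, which is then `f_α`-invariant for a.e. `α`. Measurability of the set of good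
pairs comes from the countably generated Borel σ-algebra of the circle. -/

theorem Set.Countable.generatePiSystem {α : Type*} {S : Set (Set α)} (hS : S.Countable) :
    (generatePiSystem S).Countable := by
  refine ((Set.countable_ofPred_finite_subset hS).image Set.sInter).mono fun s hs => ?_
  induction hs with
  | base h =>
    exact ⟨{_}, ⟨Set.finite_singleton _, Set.singleton_subset_iff.2 h⟩, Set.sInter_singleton _⟩
  | inter _ _ _ ih₁ ih₂ =>
    obtain ⟨u, ⟨hu, huS⟩, rfl⟩ := ih₁
    obtain ⟨v, ⟨hv, hvS⟩, rfl⟩ := ih₂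
    exact ⟨u ∪ v, ⟨hu.union hv, Set.union_subset huS hvS⟩, Set.sInter_union u v⟩

namespace ProbabilityTheory.Kernel

variable {α β γ : Type*} [MeasurableSpace α] [MeasurableSpace β] [MeasurableSpace γ]

theorem measurableSet_eq [MeasurableSpace.CountablyGenerated β] (κ η : Kernel α β)
    [IsFiniteKernel κ] [IsFiniteKernel η] : MeasurableSet {a | κ a = η a} := by
  set S := generatePiSystem (MeasurableSpace.countableGeneratingSet β)
  have hS : MeasurableSpace.generateFrom S = ‹MeasurableSpace β› :=
    generateFrom_generatePiSystem_eq.trans MeasurableSpace.generateFrom_countableGeneratingSet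
  have hSmeas : ∀ B ∈ S, MeasurableSet B := fun B hB =>
    generatePiSystem_measurableSet
      (fun _ hs => MeasurableSpace.measurableSet_countableGeneratingSet hs) B hB
  have hset : {a | κ a = η a} =
      {a | κ a Set.univ = η a Set.univ} ∩ ⋂ B ∈ S, {a | κ a B = η a B} := by
    ext a
    simp only [Set.mem_ofPred_eq, Set.mem_inter_iff, Set.mem_iInter]
    refine ⟨fun h => ⟨by rw [h], fun B _ => by rw [h]⟩, fun ⟨huniv, hB⟩ => ?_⟩
    exact ext_of_generate_finite S hS.symm (isPiSystem_generatePiSystem _) hB huniv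
  rw [hset]
  refine (measurableSet_eq_fun (κ.measurable_coe .univ) (η.measurable_coe .univ)).inter
    (.biInter (MeasurableSpace.countable_countableGeneratingSet.generatePiSystem) fun B hB => ?_)
  exact measurableSet_eq_fun (κ.measurable_coe (hSmeas B hB)) (η.measurable_coe (hSmeas B hB))

theorem map_id_prod_apply (κ : Kernel α β) [IsSFiniteKernel κ] {f : α → β → γ}
    (hf : Measurable (Function.uncurry f)) (a : α) :
    (Kernel.id ×ₖ κ).map (Function.uncurry f) a = (κ a).map (f a) := by
  have hfa : Measurable (f a) := hf.comp measurable_prodMk_left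
  ext B hB
  rw [map_apply' _ hf _ hB, id_prod_apply' _ _ (hf hB), Measure.map_apply hfa hB]
  rfl

end ProbabilityTheory.Kernel

theorem IsMarkovMeasure.map_prod_eval_zero_one {E : Type*} [MeasurableSpace E]
    {p : Kernel E E} [IsFiniteKernel p] {m : Measure E} [IsFiniteMeasure m]
    {P : Measure (ℕ → E)} (hP : IsMarkovMeasure p m P) :
    P.map (fun ω => (ω 0, ω 1)) = m ⊗ₘ p := by
  have hg : Measurable fun ω : ℕ → E => (ω 0, ω 1) := by fun_prop
  have hrect : ∀ A B, MeasurableSet A → MeasurableSet B →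
      P.map (fun ω => (ω 0, ω 1)) (A ×ˢ B) = (m ⊗ₘ p) (A ×ˢ B) := by
    intro A B hA hB
    let A' : ℕ → Set E := fun i => if i = 0 then A else B
    have hpre : (fun ω : ℕ → E => (ω 0, ω 1)) ⁻¹' (A ×ˢ B) = {ω | ∀ i ≤ 1, ω i ∈ A' i} := by
      ext ω
      simp only [Set.mem_preimage, Set.mem_prod, Set.mem_ofPred_eq,
        Nat.le_one_iff_eq_zero_or_eq_one]
      refine ⟨fun h i hi => ?_, fun h => ⟨h 0 (.inl rfl), h 1 (.inr rfl)⟩⟩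
      rcases hi with rfl | rfl
      exacts [h.1, h.2]
    rw [Measure.map_apply hg (hA.prod hB), hpre,
      hP 1 A' fun i => by by_cases hi : i = 0 <;> simp [A', hi, hA, hB],
      Measure.compProd_apply_prod hA hB]
    simp [A', chainProb]
  refine (ext_of_generate_finite _ generateFrom_prod.symm isPiSystem_prod ?_ ?_).symm
  · rintro _ ⟨A, hA, B, hB, rfl⟩
    exact (hrect A B hA hB).symm
  · simpa using (hrect Set.univ Set.univ .univ .univ).symm

theorem MeasureTheory.Measure.prod_absolutelyContinuous_compProd {α β : Type*}
    [MeasurableSpace α] [MeasurableSpace β]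
    {μ : Measure α} {ν : Measure β} [SFinite μ] [SFinite ν] {κ : Kernel α β} [IsSFiniteKernel κ]
    (h : ∀ᵐ a ∂μ, ν ≪ κ a) : μ.prod ν ≪ μ ⊗ₘ κ := by
  rw [← Measure.compProd_const]
  exact Measure.AbsolutelyContinuous.compProd_right h

theorem MeasureTheory.exists_ae_eq_of_ae_ae_eq {α β : Type*} [MeasurableSpace α]
    {μ : Measure α} [NeZero μ]
    {u v : α → β} (h : ∀ᵐ a ∂μ, ∀ᵐ a' ∂μ, u a = v a') :
    ∃ b, (∀ᵐ a ∂μ, u a = b) ∧ ∀ᵐ a ∂μ, v a = b := by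
  obtain ⟨a₀, ha₀⟩ := h.exists
  have hv : ∀ᵐ a ∂μ, v a = u a₀ := ha₀.mono fun _ h => h.symm
  refine ⟨u a₀, h.mono fun a ha => ?_, hv⟩
  obtain ⟨a', hua, hva⟩ := (ha.and hv).exists
  exact hua.trans hva

theorem common_invariant_measure_of_invariance_principle_general {E : Type*}
    [MeasurableSpace E]
    (p : ProbabilityTheory.Kernel E E) [IsMarkovKernel p]
    (m : Measure E) [IsProbabilityMeasure m]
    (C : ℝ≥0∞) (hC0 : 0 < C)
    (k : E → E → ℝ≥0∞) (hk : Measurable fun z : E × E => k z.1 z.2)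
    (hdens : ∀ α, (p α : Measure E) = m.withDensity (k α))
    (hbound : ∀ α β, C ≤ k α β ∧ k α β ≤ C⁻¹)
    (f : E → AddCircle (1 : ℝ) → AddCircle (1 : ℝ))
    (hf : Measurable fun z : E × AddCircle (1 : ℝ) => f z.1 z.2)
    (P : Measure (ℕ → E)) (hP : IsMarkovMeasure p m P)
    (μa : E → Measure (AddCircle (1 : ℝ)))
    (hμprob : ∀ α, IsProbabilityMeasure (μa α))
    (hμmeas : ∀ B : Set (AddCircle (1 : ℝ)), MeasurableSet B → Measurable fun α => μa α B)
    (hIP : ∀ᵐ ω ∂P, (μa (ω 0)).map (f (ω 0)) = μa (ω 1)) :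
    ∃ μ : Measure (AddCircle (1 : ℝ)), IsProbabilityMeasure μ ∧
      (∀ᵐ α ∂m, μa α = μ) ∧ (∀ᵐ α ∂m, μ.map (f α) = μ) := by
  let κ : Kernel E (AddCircle (1 : ℝ)) := ⟨μa, Measure.measurable_of_measurable_coe μa hμmeas⟩
  have : IsMarkovKernel κ := ⟨hμprob⟩
  let κf := (Kernel.id ×ₖ κ).map (Function.uncurry f)
  have hκf : ∀ α, κf α = (μa α).map (f α) := κ.map_id_prod_apply hf
  have hpair : MeasurableSet {z : E × E | (μa z.1).map (f z.1) = μa z.2} := by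
    simp_rw [← hκf]
    exact Kernel.measurableSet_eq (κf.prodMkRight E) (κ.prodMkLeft E)
  have hm_ac : ∀ α, m ≪ p α := fun α =>
    hdens α ▸ withDensity_absolutelyContinuous' (hk.comp measurable_prodMk_left).aemeasurable
      (.of_forall fun β => (hC0.trans_le (hbound α β).1).ne')
  have hae : ∀ᵐ z ∂m.prod m, (μa z.1).map (f z.1) = μa z.2 := by
    refine (Measure.prod_absolutelyContinuous_compProd (.of_forall hm_ac)).ae_le ?_
    have hg : Measurable fun ω : ℕ → E => (ω 0, ω 1) := by fun_prop
    change ∀ᵐ z ∂(m ⊗ₘ p), (μa z.1).map (f z.1) = μa z.2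
    rwa [← hP.map_prod_eval_zero_one, ae_map_iff hg.aemeasurable hpair]
  obtain ⟨μ, hfμ, hμ⟩ := exists_ae_eq_of_ae_ae_eq (u := fun α => (μa α).map (f α)) (v := μa)
    (Measure.ae_ae_of_ae_prod hae)
  obtain ⟨α₀, hα₀⟩ := hμ.exists
  refine ⟨μ, hα₀ ▸ hμprob α₀, hμ, ?_⟩
  filter_upwards [hμ, hfμ] with α hα hfα
  rwa [hα] at hfα

/-- For a bounded Markovian random iteration of homeomorphisms of the
circle `S¹ = ℝ/ℤ`, if `μ̂ ∈ I₀(φ)` satisfies the invariance-principle conclusion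
`(f_{ω₀})_* μ̂_ω = μ̂_{σ(ω)}` for `ℙ`-a.e. `ω`, then the disintegration `α ↦ μ_α` is
`m`-a.e. constant equal to some probability measure `μ`, which is invariant under `f_α`
for `m`-a.e. `α`. -/
theorem common_invariant_measure_of_invariance_principle {E : Type*}
    [MetricSpace E] [CompactSpace E] [MeasurableSpace E] [BorelSpace E]
    (p q : ProbabilityTheory.Kernel E E) [IsMarkovKernel p] [IsMarkovKernel q]
    (m : Measure E) [IsProbabilityMeasure m]
    (hstat : ∀ A : Set E, MeasurableSet A → m A = ∫⁻ α, p α A ∂m)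
    (huniq : ∀ m' : Measure E, IsProbabilityMeasure m' →
      (∀ A : Set E, MeasurableSet A → m' A = ∫⁻ α, p α A ∂m') → m' = m)
    (hdual : ∀ A B : Set E, MeasurableSet A → MeasurableSet B →
      ∫⁻ α in B, p α A ∂m = ∫⁻ β in A, q β B ∂m)
    (C : ℝ≥0∞) (hC0 : 0 < C) (hC1 : C ≤ 1)
    (k : E → E → ℝ≥0∞) (hk : Measurable fun z : E × E => k z.1 z.2)
    (hdens : ∀ α, (p α : Measure E) = m.withDensity (k α))
    (hbound : ∀ α β, C ≤ k α β ∧ k α β ≤ C⁻¹)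
    (f : E → AddCircle (1 : ℝ) → AddCircle (1 : ℝ))
    (hf : Measurable fun z : E × AddCircle (1 : ℝ) => f z.1 z.2)
    (hhomeo : ∀ α, ∃ h : AddCircle (1 : ℝ) ≃ₜ AddCircle (1 : ℝ), ⇑h = f α)
    (P : Measure (ℕ → E)) [IsProbabilityMeasure P] (hP : IsMarkovMeasure p m P)
    (μhat : Measure ((ℕ → E) × AddCircle (1 : ℝ))) [IsProbabilityMeasure μhat]
    (μa : E → Measure (AddCircle (1 : ℝ)))
    (hμprob : ∀ α, IsProbabilityMeasure (μa α))
    (hμmeas : ∀ B : Set (AddCircle (1 : ℝ)), MeasurableSet B → Measurable fun α => μa α B)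
    (hmarg : μhat.map Prod.fst = P)
    (hμdis : ∀ (A : Set (ℕ → E)) (B : Set (AddCircle (1 : ℝ))),
      MeasurableSet A → MeasurableSet B → μhat (A ×ˢ B) = ∫⁻ ω in A, μa (ω 0) B ∂P)
    (hinv : μhat.map (skewF f) = μhat)
    (hIP : ∀ᵐ ω ∂P, (μa (ω 0)).map (f (ω 0)) = μa (ω 1)) :
    ∃ μ : Measure (AddCircle (1 : ℝ)), IsProbabilityMeasure μ ∧
      (∀ᵐ α ∂m, μa α = μ) ∧ (∀ᵐ α ∂m, μ.map (f α) = μ) :=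
  common_invariant_measure_of_invariance_principle_general p m C hC0 k hk hdens hbound f hf P hP μa
    hμprob hμmeas hIP
end
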